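/- Let d ≥ 3. There exist constants 0 < c ≤ c' < ∞ depending only on d such that for every r ≥ 1, every point x ∈ ℝ^d and every line L ⊂ ℝ^d with dist(x, L) = r, c · r^{−(d−2)} ≤ ∫_{S^{d−1}} H^{d−1}( Π_θ(B(x,1)) ∩ Π_θ(𝔠(L)) ) dσ(θ) ≤ c' · r^{−(d−2)}, where B(x,1) is the closed Euclidean ball of radius 1 centered at x and 𝔠(L) = {z ∈ ℝ^d : dist(z, L) ≤ 1} is the cylinder of radius 1 around L. -/

import Mathlib

/-!
Write `L = a + ℝu` and `x = a + m u + r w` with `u, w` orthonormal, and complete them to an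
orthonormal basis. If `Π_θ(B(x,1))` meets `Π_θ(𝔠(L))`, a segment parallel to `θ` joins the ball to
the cylinder; its `w`-component is at least `r - 2` while its components orthogonal to `u` and `w`
are at most `2`, so every coordinate of `θ` transverse to the plane `span(u, w)` is at most `4/r`.
Conversely, if `⟪θ, w⟫ ≥ 1/2` and the transverse coordinates of `θ` are `O(1/r)`, some `q ∈ L` has
`Π_θ q` within `1/2` of `Π_θ x`, so both projections contain the disc of radius `1/2` about
`Π_θ x`. Since `Π_θ(B(x,1))` is a unit disc of `θ^⊥`, the integral is comparable to the measure of
a set of directions whose `d - 2` transverse coordinates are `O(1/r)`; measuring the cone over such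
a set against boxes in the adapted coordinates gives `≍ r^{-(d-2)}`.
-/

open MeasureTheory
open scoped ENNReal

/-- A line in `ℝ^d`: a set of the form `{a + t • v : t ∈ ℝ}` with `v ≠ 0`. -/
def IsLine {d : ℕ} (L : Set (EuclideanSpace ℝ (Fin d))) : Prop :=
  ∃ a v : EuclideanSpace ℝ (Fin d), v ≠ 0 ∧ L = {x | ∃ t : ℝ, x = a + t • v}

/-- The cylinder of radius `r` around a set `L`. -/
def cylinder {d : ℕ} (L : Set (EuclideanSpace ℝ (Fin d))) (r : ℝ) :
    Set (EuclideanSpace ℝ (Fin d)) :=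
  {x | Metric.infDist x L ≤ r}

/-- Orthogonal projection onto the hyperplane `θ^⊥` (for `θ` a unit vector). -/
noncomputable def projHyp {d : ℕ} (θ x : EuclideanSpace ℝ (Fin d)) :
    EuclideanSpace ℝ (Fin d) :=
  x - (inner ℝ x θ : ℝ) • θ

/-- The rotation-invariant (uniform) probability measure on the unit sphere of `ℝ^d`. -/
noncomputable def sphereUniform (d : ℕ) :
    Measure (Metric.sphere (0 : EuclideanSpace ℝ (Fin d)) 1) :=
  (((volume : Measure (EuclideanSpace ℝ (Fin d))).toSphere Set.univ)⁻¹) •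
    ((volume : Measure (EuclideanSpace ℝ (Fin d))).toSphere)


open Metric Set Module
open scoped RealInnerProductSpace Pointwise

section Lines

variable {V : Type*} [NormedAddCommGroup V] [InnerProductSpace ℝ V]

lemma abs_real_inner_le_one {v w : V} (hv : ‖v‖ ≤ 1) (hw : ‖w‖ ≤ 1) : |⟪v, w⟫| ≤ 1 :=
  (abs_real_inner_le_norm v w).trans (mul_le_one₀ hv (norm_nonneg w) hw)

lemma setOf_exists_eq_add_smul_smul {c : ℝ} (hc : c ≠ 0) (a v : V) :
    {x | ∃ t : ℝ, x = a + t • c • v} = {x | ∃ t : ℝ, x = a + t • v} := by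
  ext x
  constructor
  · rintro ⟨t, rfl⟩
    exact ⟨t * c, by rw [mul_smul]⟩
  · rintro ⟨t, rfl⟩
    exact ⟨t / c, by rw [smul_smul, div_mul_cancel₀ _ hc]⟩

lemma infDist_line_eq_norm_starProjection (a v z : V) :
    infDist z {x | ∃ t : ℝ, x = a + t • v} = ‖(ℝ ∙ v)ᗮ.starProjection (z - a)‖ := by
  set L := {x | ∃ t : ℝ, x = a + t • v}
  set P := (ℝ ∙ v)ᗮ.starProjection
  have hP : ∀ t : ℝ, P (t • v) = 0 := fun t => by
    rw [Submodule.starProjection_orthogonal_val, Submodule.starProjection_eq_self_iff.2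
      (Submodule.smul_mem _ t (Submodule.mem_span_singleton_self v)), sub_self]
  obtain ⟨t₀, ht₀⟩ := Submodule.mem_span_singleton.1 ((ℝ ∙ v).starProjection_apply_mem (z - a))
  have hmem : a + t₀ • v ∈ L := ⟨t₀, rfl⟩
  have hne : L.Nonempty := ⟨a, 0, by simp⟩
  refine le_antisymm ((infDist_le_dist_of_mem hmem).trans_eq ?_) ((le_infDist hne).2 ?_)
  · rw [dist_eq_norm, Submodule.starProjection_orthogonal_val, ht₀, sub_add_eq_sub_sub]
  · rintro _ ⟨t, rfl⟩
    calc ‖P (z - a)‖ = ‖P (z - (a + t • v))‖ := by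
          rw [show z - a = z - (a + t • v) + t • v by abel, map_add, hP, add_zero]
      _ ≤ dist z (a + t • v) := by
          rw [dist_eq_norm]
          exact Submodule.norm_starProjection_apply_le _ _

lemma exists_eq_add_smul_add_infDist_line (a v z : V) :
    ∃ t : ℝ, ∃ e ∈ (ℝ ∙ v)ᗮ,
      z = a + t • v + e ∧ ‖e‖ = infDist z {x | ∃ t : ℝ, x = a + t • v} := by
  obtain ⟨t, ht⟩ := Submodule.mem_span_singleton.1 ((ℝ ∙ v).starProjection_apply_mem (z - a))
  refine ⟨t, _, (ℝ ∙ v)ᗮ.starProjection_apply_mem (z - a), ?_,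
    (infDist_line_eq_norm_starProjection a v z).symm⟩
  rw [Submodule.starProjection_orthogonal_val, ht]
  abel

lemma exists_orthonormalBasis_apply_zero_apply_one [FiniteDimensional ℝ V] {k : ℕ}
    (hV : finrank ℝ V = k + 2) {u w : V} (hu : ‖u‖ = 1) (hw : ‖w‖ = 1) (huw : ⟪u, w⟫ = 0) :
    ∃ b : OrthonormalBasis (Fin (k + 2)) ℝ V, b 0 = u ∧ b 1 = w := by
  let v : Fin (k + 2) → V := fun i => if i = 0 then u else w
  have h01 : (0 : Fin (k + 2)) ≠ 1 := zero_ne_one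
  have hv : Orthonormal ℝ (({0, 1} : Set (Fin (k + 2))).domRestrict v) := by
    rw [orthonormal_iff_ite]
    rintro ⟨i, hi | hi⟩ ⟨j, hj | hj⟩ <;> subst hi hj <;>
      simp [v, Set.domRestrict_apply, Subtype.ext_iff, h01, h01.symm, hu, hw, huw,
        real_inner_comm u w]
  obtain ⟨b, hb⟩ := hv.exists_orthonormalBasis_extension_of_card_eq (by simpa using hV)
  exact ⟨b, by simpa [v] using hb 0 (by simp), by simpa [v, h01.symm] using hb 1 (by simp)⟩

end Lines

section Projections

variable {V : Type*} [NormedAddCommGroup V] [InnerProductSpace ℝ V]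

lemma Submodule.image_starProjection_closedBall (K : Submodule ℝ V) [K.HasOrthogonalProjection]
    (z : V) (s : ℝ) :
    K.starProjection '' closedBall z s = (K : Set V) ∩ closedBall (K.starProjection z) s := by
  ext y
  constructor
  · rintro ⟨p, hp, rfl⟩
    refine ⟨K.starProjection_apply_mem p, ?_⟩
    rw [mem_closedBall, dist_eq_norm, ← map_sub]
    exact (K.norm_starProjection_apply_le _).trans (mem_closedBall_iff_norm.1 hp)
  · rintro ⟨hyK, hy⟩
    refine ⟨y + (z - K.starProjection z), ?_, ?_⟩
    · rw [mem_closedBall_iff_norm,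
        show y + (z - K.starProjection z) - z = y - K.starProjection z by abel]
      exact mem_closedBall_iff_norm.1 hy
    · rw [map_add, K.starProjection_eq_self_iff.2 hyK, map_sub,
        K.starProjection_eq_self_iff.2 (K.starProjection_apply_mem z), sub_self, add_zero]

variable [MeasurableSpace V] [BorelSpace V]

lemma Submodule.hausdorffMeasure_inter_closedBall (K : Submodule ℝ V) [FiniteDimensional ℝ K]
    {n : ℕ} (hK : finrank ℝ K = n) {c : V} (hc : c ∈ K) (s : ℝ) {t : ℝ} (ht : 0 ≤ t) :
    μH[t] ((K : Set V) ∩ closedBall c s)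
      = μH[t] (closedBall (0 : EuclideanSpace ℝ (Fin n)) s) := by
  let J : EuclideanSpace ℝ (Fin n) ≃ₗᵢ[ℝ] K :=
    ((stdOrthonormalBasis ℝ K).reindex (finCongr hK)).repr.symm
  have hf : Isometry fun y => c + (J y : V) :=
    (IsometryEquiv.addLeft c).isometry.comp (K.subtypeₗᵢ.isometry.comp J.isometry)
  rw [← hf.hausdorffMeasure_image (Or.inl ht)]
  congr 1
  ext y
  constructor
  · rintro ⟨hyK, hy⟩
    refine ⟨J.symm ⟨y - c, K.sub_mem hyK hc⟩, ?_, by simp⟩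
    simpa [dist_eq_norm] using hy
  · rintro ⟨y, hy, rfl⟩
    refine ⟨K.add_mem hc (J y).2, ?_⟩
    simpa [dist_eq_norm, ← Submodule.coe_norm] using hy

end Projections

section ProjHyp

variable {d : ℕ}
local notation "E" => EuclideanSpace ℝ (Fin d)

lemma projHyp_eq_starProjection {θ : E} (hθ : ‖θ‖ = 1) :
    projHyp θ = (ℝ ∙ θ)ᗮ.starProjection := by
  ext1 x
  rw [Submodule.starProjection_orthogonal_val, Submodule.starProjection_unit_singleton ℝ hθ,
    real_inner_comm]
  rfl

lemma projHyp_mem_orthogonal {θ : E} (hθ : ‖θ‖ = 1) (x : E) : projHyp θ x ∈ (ℝ ∙ θ)ᗮ := by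
  rw [projHyp_eq_starProjection hθ]
  exact Submodule.starProjection_apply_mem _ x

lemma projHyp_sub (θ x y : E) : projHyp θ x - projHyp θ y = projHyp θ (x - y) := by
  simp only [projHyp, inner_sub_left, sub_smul]
  abel

lemma sub_eq_inner_smul_of_projHyp_eq {θ p z : E} (h : projHyp θ p = projHyp θ z) :
    p - z = ⟪p - z, θ⟫ • θ := by
  rw [projHyp, projHyp, sub_eq_sub_iff_sub_eq_sub] at h
  rwa [inner_sub_left, sub_smul]

lemma image_projHyp_closedBall {θ : E} (hθ : ‖θ‖ = 1) (z : E) (s : ℝ) :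
    projHyp θ '' closedBall z s = ((ℝ ∙ θ)ᗮ : Set E) ∩ closedBall (projHyp θ z) s := by
  rw [projHyp_eq_starProjection hθ]
  exact Submodule.image_starProjection_closedBall _ z s

lemma hausdorffMeasure_orthogonal_inter_closedBall (hd : 1 ≤ d) {θ : E} (hθ : θ ≠ 0) {c : E}
    (hc : c ∈ (ℝ ∙ θ)ᗮ) (s : ℝ) :
    μH[(d : ℝ) - 1] (((ℝ ∙ θ)ᗮ : Set E) ∩ closedBall c s)
      = μH[(d : ℝ) - 1] (closedBall (0 : EuclideanSpace ℝ (Fin (d - 1))) s) := by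
  have : Fact (finrank ℝ E = (d - 1) + 1) := ⟨by rw [finrank_euclideanSpace_fin]; omega⟩
  exact Submodule.hausdorffMeasure_inter_closedBall _
    (Submodule.finrank_orthogonal_span_singleton hθ) hc s (by simpa using hd)

lemma hausdorffMeasure_sub_one_closedBall_pos (hd : 0 < d) {s : ℝ} (hs : 0 < s) :
    0 < μH[(d : ℝ) - 1] (closedBall (0 : EuclideanSpace ℝ (Fin (d - 1))) s) := by
  rw [← Nat.cast_pred hd]
  exact measure_closedBall_pos _ _ hs

lemma hausdorffMeasure_sub_one_closedBall_lt_top (hd : 0 < d) (s : ℝ) :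
    μH[(d : ℝ) - 1] (closedBall (0 : EuclideanSpace ℝ (Fin (d - 1))) s) < ⊤ := by
  rw [← Nat.cast_pred hd]
  exact measure_closedBall_lt_top

end ProjHyp

section BallAndCylinder

variable {d : ℕ}
local notation "E" => EuclideanSpace ℝ (Fin d)

lemma mul_abs_inner_le_of_projHyp_inter_nonempty {a u w e x θ : E} {m r : ℝ}
    (hw : ‖w‖ = 1) (huw : ⟪u, w⟫ = 0) (hue : ⟪u, e⟫ = 0) (hwe : ⟪w, e⟫ = 0) (he : ‖e‖ ≤ 1)
    (hθ : ‖θ‖ = 1) (hx : x = a + m • u + r • w)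
    (h : (projHyp θ '' closedBall x 1 ∩
      projHyp θ '' cylinder {y | ∃ t : ℝ, y = a + t • u} 1).Nonempty) :
    r * |⟪e, θ⟫| ≤ 4 := by
  obtain ⟨_, ⟨p, hp, rfl⟩, z, hz, hpz⟩ := h
  obtain ⟨s, e', -, rfl, he'⟩ := exists_eq_add_smul_add_infDist_line a u z
  replace he' : ‖e'‖ ≤ 1 := he'.trans_le hz
  have hpx : ‖p - x‖ ≤ 1 := mem_closedBall_iff_norm.1 hp
  -- `p - z = t • θ`: compare its components along `w` and along `e`
  set t := ⟪p - (a + s • u + e'), θ⟫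
  have hpz' := sub_eq_inner_smul_of_projHyp_eq hpz.symm
  have hdecomp : p - (a + s • u + e') = (p - x) + (m - s) • u + r • w - e' := by
    rw [hx, sub_smul]
    abel
  have hw_comp : t * ⟪w, θ⟫ = ⟪w, p - x⟫ + r - ⟪w, e'⟫ := by
    rw [← real_inner_smul_right, ← hpz', hdecomp]
    simp only [inner_add_right, inner_sub_right, real_inner_smul_right, real_inner_self_eq_norm_sq,
      hw, real_inner_comm u w ▸ huw]
    ring
  have he_comp : t * ⟪e, θ⟫ = ⟪e, p - x⟫ - ⟪e, e'⟫ := by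
    rw [← real_inner_smul_right, ← hpz', hdecomp]
    simp only [inner_add_right, inner_sub_right, real_inner_smul_right,
      real_inner_comm u e ▸ hue, real_inner_comm w e ▸ hwe]
    ring
  have ht : r - 2 ≤ |t| :=
    calc r - 2 ≤ t * ⟪w, θ⟫ := by
          rw [hw_comp]
          linarith [abs_le.1 (abs_real_inner_le_one hw.le hpx),
            abs_le.1 (abs_real_inner_le_one hw.le he')]
      _ ≤ |t| := by
          refine (le_abs_self _).trans ?_
          rw [abs_mul]
          exact mul_le_of_le_one_right (abs_nonneg t) (abs_real_inner_le_one hw.le hθ.le)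
  have hte : |t| * |⟪e, θ⟫| ≤ 2 := by
    rw [← abs_mul, he_comp]
    linarith [abs_sub ⟪e, p - x⟫ ⟪e, e'⟫, abs_real_inner_le_one he hpx,
      abs_real_inner_le_one he he']
  nlinarith [mul_le_mul_of_nonneg_right ht (abs_nonneg ⟪e, θ⟫), abs_real_inner_le_one he hθ.le]

lemma orthogonal_inter_closedBall_subset_projHyp_inter {θ q x : E} {L : Set E} {s : ℝ}
    (hθ : ‖θ‖ = 1) (hq : q ∈ L) (hs : s + ‖projHyp θ (q - x)‖ ≤ 1) :
    ((ℝ ∙ θ)ᗮ : Set E) ∩ closedBall (projHyp θ x) s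
      ⊆ projHyp θ '' closedBall x 1 ∩ projHyp θ '' cylinder L 1 := by
  have hball : closedBall q 1 ⊆ cylinder L 1 := fun z hz =>
    (infDist_le_dist_of_mem hq).trans (mem_closedBall.1 hz)
  rintro y ⟨hyK, hy⟩
  rw [image_projHyp_closedBall hθ]
  refine ⟨⟨hyK, closedBall_subset_closedBall (by linarith [norm_nonneg (projHyp θ (q - x))]) hy⟩,
    image_mono hball ?_⟩
  rw [image_projHyp_closedBall hθ]
  refine ⟨hyK, ?_⟩
  calc dist y (projHyp θ q) ≤ dist y (projHyp θ x) + dist (projHyp θ x) (projHyp θ q) :=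
        dist_triangle _ _ _
    _ ≤ s + ‖projHyp θ (q - x)‖ := by
        rw [dist_comm (projHyp θ x), dist_eq_norm (projHyp θ q), projHyp_sub]
        exact add_le_add_left (mem_closedBall.1 hy) _
    _ ≤ 1 := hs

lemma exists_mem_line_norm_projHyp_sub_le {a u w x θ η : E} {m r α β : ℝ} (hθ : ‖θ‖ = 1)
    (hx : x = a + m • u + r • w) (hθη : θ = α • u + β • w + η) (hr : 0 ≤ r) (hβ : 0 < β) :
    ∃ q ∈ {y | ∃ t : ℝ, y = a + t • u}, ‖projHyp θ (q - x)‖ ≤ r / β * ‖η‖ := by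
  -- `q - x` is parallel to `θ - η`, whose projection is that of `-η`
  refine ⟨a + (m - r * α / β) • u, ⟨_, rfl⟩, ?_⟩
  have hqx : a + (m - r * α / β) • u - x = -(r / β) • θ + (r / β) • η := by
    rw [hx, hθη]
    match_scalars <;> field_simp <;> ring
  have hPθ : (ℝ ∙ θ)ᗮ.starProjection θ = 0 := by
    rw [Submodule.starProjection_orthogonal_val,
      Submodule.starProjection_eq_self_iff.2 (Submodule.mem_span_singleton_self θ), sub_self]
  rw [hqx, projHyp_eq_starProjection hθ, map_add, map_smul, map_smul, hPθ, smul_zero, zero_add,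
    norm_smul, Real.norm_of_nonneg (by positivity)]
  exact mul_le_mul_of_nonneg_left (Submodule.norm_starProjection_apply_le _ η) (by positivity)

end BallAndCylinder

section SphereMeasure

variable {F : Type*} [NormedAddCommGroup F] [InnerProductSpace ℝ F] {k : ℕ}

def nearPlane (b : OrthonormalBasis (Fin (k + 2)) ℝ F) (ε : ℝ) : Set (sphere (0 : F) 1) :=
  {θ | ∀ j : Fin k, |⟪b j.succ.succ, (θ : F)⟫| ≤ ε}

lemma measurableSet_nearPlane [MeasurableSpace F] [BorelSpace F]
    (b : OrthonormalBasis (Fin (k + 2)) ℝ F) (ε : ℝ) : MeasurableSet (nearPlane b ε) := by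
  simp only [nearPlane, ofPred_forall]
  exact MeasurableSet.iInter fun j => (isClosed_le (by fun_prop) continuous_const).measurableSet

lemma OrthonormalBasis.eq_inner_smul_add_inner_smul_add_sum
    (b : OrthonormalBasis (Fin (k + 2)) ℝ F) (z : F) :
    z = ⟪b 0, z⟫ • b 0 + ⟪b 1, z⟫ • b 1 + ∑ j : Fin k, ⟪b j.succ.succ, z⟫ • b j.succ.succ := by
  conv_lhs => rw [← b.sum_repr' z]
  rw [Fin.sum_univ_succ, Fin.sum_univ_succ, Fin.succ_zero_eq_one]
  exact (add_assoc _ _ _).symm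

variable [FiniteDimensional ℝ F] [MeasurableSpace F] [BorelSpace F]

lemma OrthonormalBasis.volume_setOf_inner_mem (b : OrthonormalBasis (Fin (k + 2)) ℝ F)
    {A B C : Set ℝ} (hA : MeasurableSet A) (hB : MeasurableSet B) (hC : MeasurableSet C) :
    volume {z : F | ⟪b 0, z⟫ ∈ A ∧ ⟪b 1, z⟫ ∈ B ∧ ∀ j : Fin k, ⟪b j.succ.succ, z⟫ ∈ C}
      = volume A * volume B * volume C ^ k := by
  let I : Fin (k + 2) → Set ℝ := Fin.cons A (Fin.cons B fun _ => C)
  have hpres := (PiLp.volume_preserving_ofLp (Fin (k + 2))).comp b.measurePreserving_repr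
  have hset : {z : F | ⟪b 0, z⟫ ∈ A ∧ ⟪b 1, z⟫ ∈ B ∧ ∀ j : Fin k, ⟪b j.succ.succ, z⟫ ∈ C}
      = WithLp.ofLp ∘ b.repr ⁻¹' univ.pi I := by
    ext z
    simp [I, Fin.forall_fin_succ, b.repr_apply_apply]
  rw [hset, hpres.measure_preimage (MeasurableSet.univ_pi fun i => ?_).nullMeasurableSet,
    volume_pi_pi, Fin.prod_univ_succ, Fin.prod_univ_succ]
  · simp [I, mul_assoc]
  · exact Fin.cases hA (Fin.cases hB fun _ => hC) i

lemma volume_Ioo_smul_nearPlane_le (b : OrthonormalBasis (Fin (k + 2)) ℝ F) {ε : ℝ}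
    (hε : 0 ≤ ε) :
    volume (Ioo (0 : ℝ) 1 • ((↑) '' nearPlane b ε : Set F)) ≤ ENNReal.ofReal (4 * (2 * ε) ^ k) :=
  calc volume (Ioo (0 : ℝ) 1 • ((↑) '' nearPlane b ε : Set F))
      ≤ volume {z : F | ⟪b 0, z⟫ ∈ Icc (-1) 1 ∧ ⟪b 1, z⟫ ∈ Icc (-1) 1 ∧
          ∀ j : Fin k, ⟪b j.succ.succ, z⟫ ∈ Icc (-ε) ε} := by
        refine measure_mono ?_
        rintro _ ⟨c, hc, _, ⟨θ, hθ, rfl⟩, rfl⟩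
        have hθ1 : ‖(θ : F)‖ ≤ 1 := (norm_eq_of_mem_sphere θ).le
        simp only [mem_ofPred_eq, mem_Icc, ← abs_le, real_inner_smul_right, abs_mul,
          abs_of_pos hc.1]
        refine ⟨?_, ?_, fun j => ?_⟩
        · nlinarith [abs_real_inner_le_one (b.orthonormal.1 0).le hθ1, hc.2,
            abs_nonneg ⟪b 0, (θ : F)⟫]
        · nlinarith [abs_real_inner_le_one (b.orthonormal.1 1).le hθ1, hc.2,
            abs_nonneg ⟪b 1, (θ : F)⟫]
        · nlinarith [hθ j, hc.2, abs_nonneg ⟪b j.succ.succ, (θ : F)⟫]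
    _ = ENNReal.ofReal (4 * (2 * ε) ^ k) := by
        rw [b.volume_setOf_inner_mem measurableSet_Icc measurableSet_Icc measurableSet_Icc]
        simp only [Real.volume_Icc, ← ENNReal.ofReal_pow (by linarith : 0 ≤ ε - -ε),
          ← ENNReal.ofReal_mul (by norm_num : (0 : ℝ) ≤ 1 - -1),
          ← ENNReal.ofReal_mul (by norm_num : (0 : ℝ) ≤ (1 - -1) * (1 - -1))]
        ring_nf

lemma ofReal_le_volume_Ioo_smul_inter_nearPlane (b : OrthonormalBasis (Fin (k + 2)) ℝ F)
    {ε : ℝ} (hε : 0 ≤ ε) (hkε : k * ε ^ 2 ≤ 1) :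
    ENNReal.ofReal (ε ^ k / 16)
      ≤ volume (Ioo (0 : ℝ) 1 •
          ((↑) '' ({θ : sphere (0 : F) 1 | 1 / 2 ≤ ⟪b 1, (θ : F)⟫} ∩ nearPlane b ε) : Set F)) :=
  calc ENNReal.ofReal (ε ^ k / 16)
      = volume {z : F | ⟪b 0, z⟫ ∈ Icc 0 (1 / 4) ∧ ⟪b 1, z⟫ ∈ Icc (1 / 2) (3 / 4) ∧
          ∀ j : Fin k, ⟪b j.succ.succ, z⟫ ∈ Icc (-(ε / 2)) (ε / 2)} := by
        rw [b.volume_setOf_inner_mem measurableSet_Icc measurableSet_Icc measurableSet_Icc]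
        simp only [Real.volume_Icc, ← ENNReal.ofReal_pow (by linarith : 0 ≤ ε / 2 - -(ε / 2)),
          ← ENNReal.ofReal_mul (by norm_num : (0 : ℝ) ≤ 1 / 4 - 0),
          ← ENNReal.ofReal_mul (by norm_num : (0 : ℝ) ≤ (1 / 4 - 0) * (3 / 4 - 1 / 2))]
        ring_nf
    _ ≤ _ := by
        refine measure_mono ?_
        rintro z ⟨⟨h0, h0'⟩, ⟨h1, h1'⟩, h⟩
        have hsum : ∑ j : Fin k, ⟪b j.succ.succ, z⟫ ^ 2 ≤ k * (ε / 2) ^ 2 :=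
          calc ∑ j : Fin k, ⟪b j.succ.succ, z⟫ ^ 2 ≤ ∑ _j : Fin k, (ε / 2) ^ 2 :=
                Finset.sum_le_sum fun j _ => sq_le_sq' (h j).1 (h j).2
            _ = k * (ε / 2) ^ 2 := by simp
        have hnorm : ‖z‖ ^ 2
            = ⟪b 0, z⟫ ^ 2 + ⟪b 1, z⟫ ^ 2 + ∑ j : Fin k, ⟪b j.succ.succ, z⟫ ^ 2 := by
          rw [← b.sum_sq_inner_right, Fin.sum_univ_succ, Fin.sum_univ_succ, Fin.succ_zero_eq_one]
          ring
        have hz_lt : ‖z‖ < 1 := by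
          have : ‖z‖ ^ 2 < 1 := by nlinarith
          nlinarith [norm_nonneg z]
        have hz_ge : 1 / 2 ≤ ‖z‖ := by
          have := real_inner_le_norm (b 1) z
          rw [b.orthonormal.1 1, one_mul] at this
          linarith
        have hz0 : 0 < ‖z‖ := by linarith
        have hθ : ‖z‖⁻¹ • z ∈ sphere (0 : F) 1 := by
          rw [mem_sphere_zero_iff_norm, norm_smul, norm_inv, norm_norm, inv_mul_cancel₀ hz0.ne']
        refine mem_smul.2 ⟨‖z‖, ⟨hz0, hz_lt⟩, ‖z‖⁻¹ • z, ⟨⟨_, hθ⟩, ⟨?_, fun j => ?_⟩, rfl⟩, ?_⟩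
        · show 1 / 2 ≤ ⟪b 1, ‖z‖⁻¹ • z⟫
          rw [real_inner_smul_right]
          have : 1 ≤ ‖z‖⁻¹ := one_le_inv_iff₀.2 ⟨hz0, hz_lt.le⟩
          nlinarith
        · show |⟪b j.succ.succ, ‖z‖⁻¹ • z⟫| ≤ ε
          rw [real_inner_smul_right, abs_mul, abs_inv, abs_norm, inv_mul_le_iff₀ hz0]
          nlinarith [abs_le.2 (h j)]
        · rw [smul_smul, mul_inv_cancel₀ hz0.ne', one_smul]

end SphereMeasure

section Overlap

variable {d k : ℕ}
local notation "E" => EuclideanSpace ℝ (Fin d)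

/-- Up to a dimensional constant, the Haar measure of the set of lines meeting both `A` and `B`. -/
noncomputable def projectionOverlap (A B : Set E) : ℝ≥0∞ :=
  ∫⁻ θ : sphere (0 : E) 1, μH[(d : ℝ) - 1] (projHyp (θ : E) '' A ∩ projHyp (θ : E) '' B)
    ∂(sphereUniform d)

lemma sphereUniform_apply (hd : d ≠ 0) {A : Set (sphere (0 : E) 1)} (hA : MeasurableSet A) :
    sphereUniform d A = volume (Ioo (0 : ℝ) 1 • ((↑) '' A : Set E)) / volume (ball (0 : E) 1) := by
  rw [sphereUniform, Measure.smul_apply, smul_eq_mul, Measure.toSphere_apply_univ,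
    Measure.toSphere_apply' _ hA, finrank_euclideanSpace_fin, ← ENNReal.div_eq_inv_mul,
    ENNReal.mul_div_mul_left _ _ (by exact_mod_cast hd) (ENNReal.natCast_ne_top d)]

lemma IsLine.exists_orthonormalBasis {L : Set E} (hL : IsLine L) (hd : d = k + 2) {x : E} {r : ℝ}
    (hr : 0 < r) (hx : infDist x L = r) :
    ∃ (b : OrthonormalBasis (Fin (k + 2)) ℝ E) (a : E) (m : ℝ),
      L = {y | ∃ t : ℝ, y = a + t • b 0} ∧ x = a + m • b 0 + r • b 1 := by
  obtain ⟨a, v, hv, rfl⟩ := hL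
  set u := ‖v‖⁻¹ • v
  have hu : ‖u‖ = 1 := norm_smul_inv_norm hv
  rw [← setOf_exists_eq_add_smul_smul (inv_ne_zero (norm_ne_zero_iff.2 hv)) a v] at hx ⊢
  obtain ⟨m, e, he, rfl, hre⟩ := exists_eq_add_smul_add_infDist_line a u x
  rw [hx] at hre
  have hw : ‖r⁻¹ • e‖ = 1 := by
    rw [norm_smul, hre, norm_inv, Real.norm_of_nonneg hr.le, inv_mul_cancel₀ hr.ne']
  have huw : ⟪u, r⁻¹ • e⟫ = 0 := by
    rw [real_inner_smul_right, Submodule.mem_orthogonal_singleton_iff_inner_right.1 he, mul_zero]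
  obtain ⟨b, hb0, hb1⟩ := exists_orthonormalBasis_apply_zero_apply_one
    (by rw [finrank_euclideanSpace_fin, hd]) hu hw huw
  refine ⟨b, a, m, by rw [hb0], ?_⟩
  rw [hb0, hb1, smul_inv_smul₀ hr.ne']

variable (b : OrthonormalBasis (Fin (k + 2)) ℝ (EuclideanSpace ℝ (Fin d)))
  {a x : EuclideanSpace ℝ (Fin d)} {L : Set (EuclideanSpace ℝ (Fin d))} {m r : ℝ}

lemma hausdorffMeasure_closedBall_le_of_mem_nearPlane (hL : L = {y | ∃ t : ℝ, y = a + t • b 0})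
    (hx : x = a + m • b 0 + r • b 1) (hr : 0 ≤ r) {ε : ℝ} (hε : 2 * r * (k * ε) ≤ 1 / 2)
    {θ : sphere (0 : E) 1} (hθb : 1 / 2 ≤ ⟪b 1, (θ : E)⟫) (hθ : θ ∈ nearPlane b ε) :
    μH[(d : ℝ) - 1] (closedBall (0 : EuclideanSpace ℝ (Fin (d - 1))) (1 / 2))
      ≤ μH[(d : ℝ) - 1] (projHyp (θ : E) '' closedBall x 1 ∩ projHyp (θ : E) '' cylinder L 1) := by
  have hd : d = k + 2 := by simpa using finrank_eq_card_basis b.toBasis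
  have hθ1 : ‖(θ : E)‖ = 1 := norm_eq_of_mem_sphere θ
  set η := ∑ j : Fin k, ⟪b j.succ.succ, (θ : E)⟫ • b j.succ.succ
  have hη : ‖η‖ ≤ k * ε :=
    calc ‖η‖ ≤ ∑ j : Fin k, ‖⟪b j.succ.succ, (θ : E)⟫ • b j.succ.succ‖ := norm_sum_le _ _
      _ ≤ ∑ _j : Fin k, ε := Finset.sum_le_sum fun j _ => by
          rw [norm_smul, b.orthonormal.1, mul_one, Real.norm_eq_abs]
          exact hθ j
      _ = k * ε := by simp
  obtain ⟨q, hq, hqx⟩ := exists_mem_line_norm_projHyp_sub_le hθ1 hx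
    (b.eq_inner_smul_add_inner_smul_add_sum θ) hr (by linarith : (0 : ℝ) < ⟪b 1, (θ : E)⟫)
  have hrβ : r / ⟪b 1, (θ : E)⟫ ≤ 2 * r := by
    rw [div_le_iff₀ (by linarith)]
    nlinarith
  have hqx' : ‖projHyp (θ : E) (q - x)‖ ≤ 1 / 2 :=
    hqx.trans ((mul_le_mul hrβ hη (norm_nonneg η) (by positivity)).trans hε)
  calc μH[(d : ℝ) - 1] (closedBall (0 : EuclideanSpace ℝ (Fin (d - 1))) (1 / 2))
      = μH[(d : ℝ) - 1] (((ℝ ∙ (θ : E))ᗮ : Set E) ∩ closedBall (projHyp (θ : E) x) (1 / 2)) :=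
        (hausdorffMeasure_orthogonal_inter_closedBall (by omega) (ne_zero_of_mem_unit_sphere θ)
          (projHyp_mem_orthogonal hθ1 x) _).symm
    _ ≤ _ := measure_mono (orthogonal_inter_closedBall_subset_projHyp_inter hθ1 (hL ▸ hq)
          (by linarith))

lemma hausdorffMeasure_projHyp_inter_le_indicator (hL : L = {y | ∃ t : ℝ, y = a + t • b 0})
    (hx : x = a + m • b 0 + r • b 1) (hr : 0 < r) (θ : sphere (0 : E) 1) :
    μH[(d : ℝ) - 1] (projHyp (θ : E) '' closedBall x 1 ∩ projHyp (θ : E) '' cylinder L 1)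
      ≤ (nearPlane b (4 / r)).indicator
          (fun _ => μH[(d : ℝ) - 1] (closedBall (0 : EuclideanSpace ℝ (Fin (d - 1))) 1)) θ := by
  have hd : d = k + 2 := by simpa using finrank_eq_card_basis b.toBasis
  have hθ1 : ‖(θ : E)‖ = 1 := norm_eq_of_mem_sphere θ
  by_cases hθ : θ ∈ nearPlane b (4 / r)
  · rw [indicator_of_mem hθ, ← hausdorffMeasure_orthogonal_inter_closedBall (by omega)
      (ne_zero_of_mem_unit_sphere θ) (projHyp_mem_orthogonal hθ1 x), ← image_projHyp_closedBall hθ1]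
    exact measure_mono inter_subset_left
  · have hempty : projHyp (θ : E) '' closedBall x 1 ∩ projHyp (θ : E) '' cylinder L 1 = ∅ := by
      refine not_nonempty_iff_eq_empty.1 fun h => hθ fun j => (le_div_iff₀' hr).2 ?_
      have h0 : (0 : Fin (k + 2)) ≠ j.succ.succ := (Fin.succ_ne_zero _).symm
      have h1 : (1 : Fin (k + 2)) ≠ j.succ.succ := by
        rw [← Fin.succ_zero_eq_one, Ne, Fin.succ_inj]
        exact (Fin.succ_ne_zero _).symm
      subst hL
      exact mul_abs_inner_le_of_projHyp_inter_nonempty (b.orthonormal.1 1)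
        (b.orthonormal.2 zero_ne_one) (b.orthonormal.2 h0) (b.orthonormal.2 h1)
        (b.orthonormal.1 _).le hθ1 hx h
    rw [hempty, measure_empty]
    exact zero_le

end Overlap

section Bounds

variable {d : ℕ}
local notation "E" => EuclideanSpace ℝ (Fin d)

lemma exists_pos_ofReal_le_projectionOverlap (hd : 2 ≤ d) :
    ∃ c : ℝ, 0 < c ∧ ∀ r : ℝ, 1 ≤ r → ∀ (x : E) (L : Set E), IsLine L → infDist x L = r →
      ENNReal.ofReal (c / r ^ (d - 2)) ≤ projectionOverlap (closedBall x 1) (cylinder L 1) := by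
  set k := d - 2
  set κ := μH[(d : ℝ) - 1] (closedBall (0 : EuclideanSpace ℝ (Fin (d - 1))) (1 / 2))
  set V := volume (ball (0 : E) 1)
  have hκ0 : κ ≠ 0 := (hausdorffMeasure_sub_one_closedBall_pos (by omega) (by norm_num)).ne'
  have hκV : κ / V ≠ ⊤ := ENNReal.div_ne_top (hausdorffMeasure_sub_one_closedBall_lt_top (by omega) _).ne
    (measure_ball_pos _ _ one_pos).ne'
  have hκ : 0 < (κ / V).toReal :=
    ENNReal.toReal_pos (ENNReal.div_pos_iff.2 ⟨hκ0, measure_ball_lt_top.ne⟩).ne' hκV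
  refine ⟨(κ / V).toReal * ((1 / (4 * (k + 1))) ^ k / 16), by positivity, ?_⟩
  intro r hr x L hL hx
  obtain ⟨b, a, m, hLb, hxb⟩ := hL.exists_orthonormalBasis (by omega : d = k + 2) (by linarith) hx
  set ε : ℝ := 1 / (4 * (k + 1) * r)
  have hε0 : 0 ≤ ε := by positivity
  have hkε : r * (k * ε) ≤ 1 / 4 := by
    rw [show r * (k * ε) = k / (4 * (k + 1)) by simp only [ε]; field_simp,
      div_le_iff₀ (by positivity)]
    linarith
  have hε1 : ε ≤ 1 := by
    rw [div_le_one (by positivity)]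
    nlinarith
  set G := {θ : sphere (0 : E) 1 | 1 / 2 ≤ ⟪b 1, (θ : E)⟫} ∩ nearPlane b ε
  have hG : MeasurableSet G :=
    (isClosed_le continuous_const (by fun_prop)).measurableSet.inter (measurableSet_nearPlane b ε)
  calc ENNReal.ofReal ((κ / V).toReal * ((1 / (4 * (k + 1))) ^ k / 16) / r ^ k)
      = κ / V * ENNReal.ofReal (ε ^ k / 16) := by
        have hreal : (κ / V).toReal * ((1 / (4 * (k + 1))) ^ k / 16) / r ^ k
            = (κ / V).toReal * (ε ^ k / 16) := by
          simp only [ε, div_pow, one_pow, mul_pow]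
          field_simp
        rw [hreal, ENNReal.ofReal_mul hκ.le, ENNReal.ofReal_toReal hκV]
    _ ≤ κ / V * volume (Ioo (0 : ℝ) 1 • ((↑) '' G : Set E)) := by
        gcongr
        refine ofReal_le_volume_Ioo_smul_inter_nearPlane b hε0 ?_
        nlinarith [mul_nonneg (Nat.cast_nonneg k) hε0, mul_nonneg (Nat.cast_nonneg k) (sq_nonneg ε)]
    _ = ∫⁻ θ, G.indicator (fun _ => κ) θ ∂(sphereUniform d) := by
        rw [lintegral_indicator_const hG, sphereUniform_apply (by omega) hG, ENNReal.mul_comm_div]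
    _ ≤ projectionOverlap (closedBall x 1) (cylinder L 1) :=
        lintegral_mono (indicator_le fun θ hθ =>
          hausdorffMeasure_closedBall_le_of_mem_nearPlane b hLb hxb (by linarith)
            (by linarith) hθ.1 hθ.2)

lemma exists_projectionOverlap_le_ofReal (hd : 2 ≤ d) :
    ∃ C : ℝ, ∀ r : ℝ, 1 ≤ r → ∀ (x : E) (L : Set E), IsLine L → infDist x L = r →
      projectionOverlap (closedBall x 1) (cylinder L 1) ≤ ENNReal.ofReal (C / r ^ (d - 2)) := by
  set k := d - 2
  set K := μH[(d : ℝ) - 1] (closedBall (0 : EuclideanSpace ℝ (Fin (d - 1))) 1)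
  set V := volume (ball (0 : E) 1)
  have hKV : K / V ≠ ⊤ := ENNReal.div_ne_top (hausdorffMeasure_sub_one_closedBall_lt_top (by omega) 1).ne
    (measure_ball_pos _ _ one_pos).ne'
  refine ⟨(K / V).toReal * (4 * 8 ^ k), fun r hr x L hL hx => ?_⟩
  have hr0 : 0 < r := by linarith
  obtain ⟨b, a, m, hLb, hxb⟩ := hL.exists_orthonormalBasis (by omega : d = k + 2) hr0 hx
  calc projectionOverlap (closedBall x 1) (cylinder L 1)
      ≤ ∫⁻ θ, (nearPlane b (4 / r)).indicator (fun _ => K) θ ∂(sphereUniform d) :=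
        lintegral_mono (hausdorffMeasure_projHyp_inter_le_indicator b hLb hxb hr0)
    _ = K / V * volume (Ioo (0 : ℝ) 1 • ((↑) '' nearPlane b (4 / r) : Set E)) := by
        rw [lintegral_indicator_const (measurableSet_nearPlane b _),
          sphereUniform_apply (by omega) (measurableSet_nearPlane b _), ENNReal.mul_comm_div]
    _ ≤ K / V * ENNReal.ofReal (4 * (2 * (4 / r)) ^ k) := by
        gcongr
        exact volume_Ioo_smul_nearPlane_le b (by positivity)
    _ = ENNReal.ofReal ((K / V).toReal * (4 * 8 ^ k) / r ^ k) := by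
        rw [mul_div_assoc, ENNReal.ofReal_mul ENNReal.toReal_nonneg, ENNReal.ofReal_toReal hKV]
        congr 2
        rw [show 2 * (4 / r) = 8 / r by ring, div_pow]
        ring

end Bounds

theorem stmt7 (d : ℕ) (hd : 3 ≤ d) :
    ∃ c c' : ℝ, 0 < c ∧ c ≤ c' ∧
      ∀ r : ℝ, 1 ≤ r → ∀ x : EuclideanSpace ℝ (Fin d), ∀ L : Set (EuclideanSpace ℝ (Fin d)),
        IsLine L → Metric.infDist x L = r →
          ENNReal.ofReal (c / r ^ (d - 2)) ≤
              (∫⁻ θ : Metric.sphere (0 : EuclideanSpace ℝ (Fin d)) 1,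
                μH[(d : ℝ) - 1] (projHyp (θ : EuclideanSpace ℝ (Fin d)) '' Metric.closedBall x 1 ∩
                  projHyp (θ : EuclideanSpace ℝ (Fin d)) '' cylinder L 1)
                ∂(sphereUniform d)) ∧
            (∫⁻ θ : Metric.sphere (0 : EuclideanSpace ℝ (Fin d)) 1,
                μH[(d : ℝ) - 1] (projHyp (θ : EuclideanSpace ℝ (Fin d)) '' Metric.closedBall x 1 ∩
                  projHyp (θ : EuclideanSpace ℝ (Fin d)) '' cylinder L 1)
                ∂(sphereUniform d))
              ≤ ENNReal.ofReal (c' / r ^ (d - 2)) := by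
  obtain ⟨c, hc, hlower⟩ := exists_pos_ofReal_le_projectionOverlap (by omega : 2 ≤ d)
  obtain ⟨C, hupper⟩ := exists_projectionOverlap_le_ofReal (by omega : 2 ≤ d)
  refine ⟨c, max c C, hc, le_max_left c C, fun r hr x L hL hx =>
    ⟨hlower r hr x L hL hx, (hupper r hr x L hL hx).trans (ENNReal.ofReal_le_ofReal ?_)⟩⟩
  have : 0 < r ^ (d - 2) := pow_pos (by linarith) _
  gcongr
  exact le_max_right c C
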